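/- arXiv:1705.09798 — 2 statements merged into one kernel-verified Lean document; each statement's English description precedes it below -/
import Mathlib

section
/- Fix reals s with 0 < s ≤ 1 and p with 0 < p ≤ s/18. Let aᵢ, aᵢ⁺⁺ : ℝ → ℝ (i ∈ {1,2,3}, indices cyclic mod 3) be a trajectory of the source-free oscillator dynamics (aᵢ' = p·aᵢ₋₁(aᵢ + aᵢ⁺⁺) − p·aᵢ(aᵢ₊₁ + aᵢ₊₁⁺⁺), (aᵢ⁺⁺)' = aᵢ² − s·aᵢ⁺⁺, aᵢ > 0, a₁+a₂+a₃ ≡ s, 0 ≤ aᵢ⁺⁺ ≤ aᵢ). Define κᵢ = s·aᵢ⁺⁺/aᵢ − aᵢ, κ = √(κ₁²+κ₂²+κ₃²), δᵢ = aᵢ − aᵢ₋₁, δ = √(δ₁²+δ₂²+δ₃²). Then at every time t with κ(t) > 0, the function κ is differentiable and κ'(t) ≤ −(s/2)·κ(t) + 18·p·δ(t). -/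
/-!
Write `κᵢ = s·aᵢ⁺⁺/aᵢ − aᵢ`. The dynamics give `κᵢ' = −s·κᵢ − (aᵢ'/aᵢ)(κᵢ + 2aᵢ)` with
`0 ≤ κᵢ + 2aᵢ ≤ s + aᵢ`, and substituting `s·aⱼ⁺⁺ = aⱼ(κⱼ + aⱼ)` into the dynamics bounds the
growth rate `|aᵢ'/aᵢ|` by `p(4δ + κ)`. Hence `κ·κ' = Σ κᵢκᵢ' ≤ −s·κ² + 4s·p(4δ + κ)·κ`, and
`p ≤ s/18 ≤ 1/18` lets half of the damping absorb the `κ²` term.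
-/

open Finset

lemma abs_le_sqrt_sum_sq {ι : Type*} [Fintype ι] (f : ι → ℝ) (i : ι) :
    |f i| ≤ √(∑ j, f j ^ 2) :=
  Real.abs_le_sqrt (single_le_sum (fun j _ => sq_nonneg (f j)) (mem_univ i))

lemma ZMod.sum_three {M : Type*} [AddCommMonoid M] (f : ZMod 3 → M) :
    ∑ i, f i = f 0 + f 1 + f 2 :=
  Fin.sum_univ_three f

lemma ZMod.sum_three_eq_around {M : Type*} [AddCommMonoid M] (f : ZMod 3 → M) (i : ZMod 3) :
    ∑ j, f j = f (i - 1) + f i + f (i + 1) := by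
  rw [ZMod.sum_three]
  fin_cases i
  · exact (add_rotate _ _ _).symm
  · rfl
  · exact add_rotate _ _ _

lemma HasDerivAt.sqrt_sum_sq {ι : Type*} (u : Finset ι) {f : ι → ℝ → ℝ} {f' : ι → ℝ} {t : ℝ}
    (hf : ∀ i ∈ u, HasDerivAt (f i) (f' i) t) (hpos : 0 < ∑ i ∈ u, f i t ^ 2) :
    HasDerivAt (fun τ => √(∑ i ∈ u, f i τ ^ 2))
      ((∑ i ∈ u, f i t * f' i) / √(∑ i ∈ u, f i t ^ 2)) t := by
  convert (HasDerivAt.fun_sum fun i hi => (hf i hi).fun_pow 2).sqrt hpos.ne' using 1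
  simp only [Nat.cast_ofNat, Nat.add_one_sub_one, pow_one, mul_assoc, ← mul_sum]
  rw [mul_div_mul_left _ _ two_ne_zero]

lemma mul_drift_le {s κ K g G c C : ℝ} (hκ : |κ| ≤ K) (hg : |g| ≤ G) (hc₀ : 0 ≤ c)
    (hc : c ≤ C) : κ * (-s * κ - g * c) ≤ -s * κ ^ 2 + K * G * C := by
  have : |κ * g * c| ≤ K * G * C := by
    rw [abs_mul, abs_mul, abs_of_nonneg hc₀]
    have hK : 0 ≤ K := (abs_nonneg κ).trans hκ
    have hG : 0 ≤ G := (abs_nonneg g).trans hg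
    gcongr
  linarith [neg_abs_le (κ * g * c)]

lemma hasDerivAt_corrective {a app : ℝ → ℝ} {a' s t : ℝ} (ha : HasDerivAt a a' t)
    (happ : HasDerivAt app (a t ^ 2 - s * app t) t) (hne : a t ≠ 0) :
    HasDerivAt (fun τ => s * app τ / a τ - a τ)
      (-s * (s * app t / a t - a t) - a' / a t * (s * app t / a t - a t + 2 * a t)) t := by
  refine (((happ.const_mul s).fun_div ha hne).fun_sub ha).congr_deriv ?_
  field_simp
  ring

lemma corrective_add_two_mul_nonneg {s a app : ℝ} (hs : 0 ≤ s) (ha : 0 < a) (happ : 0 ≤ app) :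
    0 ≤ s * app / a - a + 2 * a := by
  have : 0 ≤ s * app / a := by positivity
  linarith

lemma corrective_add_two_mul_le {s a app : ℝ} (hs : 0 ≤ s) (ha : 0 < a) (happ : app ≤ a) :
    s * app / a - a + 2 * a ≤ s + a := by
  have : s * app / a ≤ s := by
    rw [div_le_iff₀ ha]
    exact mul_le_mul_of_nonneg_left happ hs
  linarith

lemma abs_growth_rate_le {s p K d aPrev a aNext app appNext : ℝ} (hp : 0 ≤ p)
    (haPrev : 0 < aPrev) (ha : 0 < a) (haNext : 0 < aNext) (hsum : aPrev + a + aNext = s)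
    (hκ : |s * app / a - a| ≤ K) (hκNext : |s * appNext / aNext - aNext| ≤ K)
    (hd : |a - aPrev| ≤ d) (hdNext : |aNext - a| ≤ d) :
    |(p * aPrev * (a + app) - p * a * (aNext + appNext)) / a| ≤ p * (4 * d + K) := by
  set κ := s * app / a - a
  set κNext := s * appNext / aNext - aNext
  have hs : 0 < s := by linarith
  have key : (p * aPrev * (a + app) - p * a * (aNext + appNext)) / a
      = p / s * (s * (aPrev - aNext) + (aPrev * κ - aNext * κNext) + (aPrev * a - aNext ^ 2)) := by
    simp only [κ, κNext]
    field_simp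
    ring
  have h₁ : |aPrev - aNext| ≤ 2 * d := by
    rw [abs_le] at hd hdNext ⊢; constructor <;> linarith
  have h₂ : |aPrev * κ - aNext * κNext| ≤ s * K := by
    calc |aPrev * κ - aNext * κNext| ≤ aPrev * |κ| + aNext * |κNext| := by
          simpa [abs_mul, abs_of_pos haPrev, abs_of_pos haNext]
            using abs_sub (aPrev * κ) (aNext * κNext)
      _ ≤ aPrev * K + aNext * K := by gcongr
      _ ≤ s * K := by nlinarith [(abs_nonneg κ).trans hκ]
  have h₃ : |aPrev * a - aNext ^ 2| ≤ 2 * s * d := by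
    have hd' : |a - aNext| ≤ d := abs_sub_comm a aNext ▸ hdNext
    calc |aPrev * a - aNext ^ 2| = |aPrev * (a - aNext) + aNext * (aPrev - aNext)| := by ring_nf
      _ ≤ aPrev * |a - aNext| + aNext * |aPrev - aNext| := by
          simpa [abs_mul, abs_of_pos haPrev, abs_of_pos haNext]
            using abs_add_le (aPrev * (a - aNext)) (aNext * (aPrev - aNext))
      _ ≤ aPrev * d + aNext * (2 * d) := by gcongr
      _ ≤ 2 * s * d := by nlinarith [(abs_nonneg (a - aPrev)).trans hd]
  rw [key, abs_mul, abs_of_nonneg (by positivity)]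
  calc p / s * |s * (aPrev - aNext) + (aPrev * κ - aNext * κNext) + (aPrev * a - aNext ^ 2)|
      ≤ p / s * (s * (2 * d) + s * K + 2 * s * d) := by
        gcongr
        refine (abs_add_le _ _).trans (add_le_add ((abs_add_le _ _).trans (add_le_add ?_ h₂)) h₃)
        rw [abs_mul, abs_of_pos hs]
        gcongr
    _ = p * (4 * d + K) := by field_simp; ring

lemma damping_absorbs_drift {s p K δ : ℝ} (hs : 0 < s) (hs1 : s ≤ 1) (hp : 0 < p)
    (hp18 : p ≤ s / 18) (hK : 0 ≤ K) (hδ : 0 ≤ δ) :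
    -s * K ^ 2 + 4 * s * p * (4 * δ + K) * K ≤ (-(s / 2) * K + 18 * p * δ) * K := by
  nlinarith [mul_nonneg (mul_nonneg hs.le (sq_nonneg K)) (by linarith : 0 ≤ 1 / 2 - 4 * p),
    mul_nonneg (mul_nonneg hp.le (mul_nonneg hδ hK)) (by linarith : 0 ≤ 18 - 16 * s)]

/-- Along a trajectory of the source-free oscillator dynamics with `p ≤ s/18`,
at every time with `κ(t) > 0` the function `κ = √(Σκᵢ²)` is differentiable and
`κ'(t) ≤ −(s/2)κ(t) + 18pδ(t)`. -/
theorem kappa_drift_bound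
    (s p : ℝ) (hs : 0 < s) (hs1 : s ≤ 1) (hp : 0 < p) (hp18 : p ≤ s / 18)
    (a app : ZMod 3 → ℝ → ℝ)
    (hpos : ∀ i t, 0 < a i t)
    (hsum : ∀ t, a 0 t + a 1 t + a 2 t = s)
    (happ : ∀ i t, 0 ≤ app i t ∧ app i t ≤ a i t)
    (hda : ∀ i t, HasDerivAt (a i)
      (p * a (i - 1) t * (a i t + app i t)
        - p * a i t * (a (i + 1) t + app (i + 1) t)) t)
    (hdapp : ∀ i t, HasDerivAt (app i) ((a i t) ^ 2 - s * app i t) t) :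
    ∀ t : ℝ,
      0 < Real.sqrt (∑ i : ZMod 3, (s * app i t / a i t - a i t) ^ 2) →
      DifferentiableAt ℝ
          (fun τ => Real.sqrt (∑ i : ZMod 3, (s * app i τ / a i τ - a i τ) ^ 2)) t ∧
        deriv (fun τ => Real.sqrt (∑ i : ZMod 3, (s * app i τ / a i τ - a i τ) ^ 2)) t
          ≤ -(s / 2) * Real.sqrt (∑ i : ZMod 3, (s * app i t / a i t - a i t) ^ 2)
            + 18 * p * Real.sqrt (∑ i : ZMod 3, (a i t - a (i - 1) t) ^ 2) := by
  intro t hK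
  set κ : ZMod 3 → ℝ := fun i => s * app i t / a i t - a i t
  set K := √(∑ i, κ i ^ 2)
  set δ := √(∑ i : ZMod 3, (a i t - a (i - 1) t) ^ 2)
  set rate : ZMod 3 → ℝ := fun i =>
    (p * a (i - 1) t * (a i t + app i t) - p * a i t * (a (i + 1) t + app (i + 1) t)) / a i t
  have hderiv := HasDerivAt.sqrt_sum_sq univ
    (fun i _ => hasDerivAt_corrective (hda i t) (hdapp i t) (hpos i t).ne')
    (Real.sqrt_pos.mp hK)
  refine ⟨hderiv.differentiableAt, ?_⟩
  rw [hderiv.deriv, div_le_iff₀ hK]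
  have hsum' : ∑ i, a i t = s := (ZMod.sum_three _).trans (hsum t)
  have hrate (i : ZMod 3) : |rate i| ≤ p * (4 * δ + K) := by
    refine abs_growth_rate_le hp.le (hpos _ t) (hpos _ t) (hpos _ t)
      ((ZMod.sum_three_eq_around (a · t) i).symm.trans hsum')
      (abs_le_sqrt_sum_sq κ i) (abs_le_sqrt_sum_sq κ (i + 1))
      (abs_le_sqrt_sum_sq (fun j => a j t - a (j - 1) t) i) ?_
    simpa using abs_le_sqrt_sum_sq (fun j => a j t - a (j - 1) t) (i + 1)
  have hdrift : ∑ i, κ i * (-s * κ i - rate i * (κ i + 2 * a i t))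
      ≤ ∑ i, (-s * κ i ^ 2 + K * (p * (4 * δ + K)) * (s + a i t)) :=
    sum_le_sum fun i _ => mul_drift_le (abs_le_sqrt_sum_sq κ i) (hrate i)
      (corrective_add_two_mul_nonneg hs.le (hpos i t) (happ i t).1)
      (corrective_add_two_mul_le hs.le (hpos i t) (happ i t).2)
  have hK2 : K ^ 2 = ∑ i, κ i ^ 2 := Real.sq_sqrt (sum_nonneg fun i _ => sq_nonneg _)
  have hbound : ∑ i, (-s * κ i ^ 2 + K * (p * (4 * δ + K)) * (s + a i t))
      = -s * K ^ 2 + 4 * s * p * (4 * δ + K) * K := by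
    rw [hK2, ZMod.sum_three, ZMod.sum_three]
    linear_combination K * (p * (4 * δ + K)) * hsum t
  calc ∑ i, κ i * (-s * κ i - rate i * (κ i + 2 * a i t))
      ≤ -s * K ^ 2 + 4 * s * p * (4 * δ + K) * K := hbound ▸ hdrift
    _ ≤ (-(s / 2) * K + 18 * p * δ) * K :=
      damping_absorbs_drift hs hs1 hp hp18 hK.le (Real.sqrt_nonneg _)
end

section
/- Fix reals s with 0 < s ≤ 1, p > 0, x ≥ 0, an index i ∈ {1,2,3} (indices cyclic mod 3), reals a₁, a₂, a₃ ≥ 0 with a₁+a₂+a₃ = s, and reals aⱼ⁺⁺ with 0 ≤ aⱼ⁺⁺ ≤ aⱼ for j ∈ {1,2,3}. If aᵢ₋₁ < 0.8·s and aᵢ₊₁ < 0.05·s, then x·(s/3 − aᵢ₋₁) + p·aᵢ₊₁·(aᵢ₋₁ + aᵢ₋₁⁺⁺) − p·aᵢ₋₁·(aᵢ + aᵢ⁺⁺) ≤ x·s/3 − 0.05·p·s·aᵢ₋₁. -/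
/-!
Write `b, d, c` for the shares of species `i − 1, i, i + 1`, so `b + d + c = s`; the hypotheses
force `d > 0.15·s`. Since `aᵢ₋₁⁺⁺ ≤ b`, the gain term `p·c·(b + aᵢ₋₁⁺⁺)` is at most `0.1·p·s·b`,
while the loss term `p·b·(d + aᵢ⁺⁺)` is at least `0.15·p·s·b`; the outflow `−x·b` only helps.
-/

theorem ZMod.three_sub_one_add_self_add_add_one {M : Type*} [AddCommMonoid M] (a : ZMod 3 → M)
    (i : ZMod 3) : a (i - 1) + a i + a (i + 1) = a 0 + a 1 + a 2 := by
  fin_cases i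
  · exact add_rotate _ _ _
  · rfl
  · exact (add_rotate _ _ _).symm

theorem drift_le_of_lt_of_lt {s p x b d c b' d' : ℝ} (hp : 0 ≤ p) (hx : 0 ≤ x) (hb : 0 ≤ b)
    (hc : 0 ≤ c) (hb' : b' ≤ b) (hd' : 0 ≤ d') (hsum : b + d + c = s)
    (hbs : b < 0.8 * s) (hcs : c < 0.05 * s) :
    x * (s / 3 - b) + p * c * (b + b') - p * b * (d + d') ≤ x * s / 3 - 0.05 * p * s * b := by
  have hgain : c * (b + b') ≤ 0.1 * s * b :=
    calc c * (b + b') ≤ c * (2 * b) := by gcongr; linarith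
      _ ≤ 0.05 * s * (2 * b) := by gcongr
      _ = 0.1 * s * b := by ring
  have hloss : 0.15 * s * b ≤ b * (d + d') := by
    rw [mul_comm]
    gcongr
    linarith
  have hout : x * (s / 3 - b) ≤ x * (s / 3) := by gcongr; linarith
  have := mul_le_mul_of_nonneg_left hgain hp
  have := mul_le_mul_of_nonneg_left hloss hp
  linarith

theorem drift_bound_region_one_general
    (s p x : ℝ) (hp : 0 < p) (hx : 0 ≤ x)
    (i : ZMod 3)
    (a app : ZMod 3 → ℝ)
    (hnn : ∀ j, 0 ≤ a j)
    (hsum : a 0 + a 1 + a 2 = s)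
    (happ : ∀ j, 0 ≤ app j ∧ app j ≤ a j)
    (h1 : a (i - 1) < 0.8 * s) (h2 : a (i + 1) < 0.05 * s) :
    x * (s / 3 - a (i - 1)) + p * a (i + 1) * (a (i - 1) + app (i - 1))
        - p * a (i - 1) * (a i + app i)
      ≤ x * s / 3 - 0.05 * p * s * a (i - 1) :=
  drift_le_of_lt_of_lt hp.le hx (hnn _) (hnn _) (happ _).2 (happ _).1
    ((ZMod.three_sub_one_add_self_add_add_one a i).trans hsum) h1 h2

/-- If `aᵢ₋₁ < 0.8s` and `aᵢ₊₁ < 0.05s`, then the drift of species `i−1`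
satisfies `ȧᵢ₋₁ ≤ xs/3 − 0.05psaᵢ₋₁`. -/
theorem drift_bound_region_one
    (s p x : ℝ) (hs : 0 < s) (hs1 : s ≤ 1) (hp : 0 < p) (hx : 0 ≤ x)
    (i : ZMod 3)
    (a app : ZMod 3 → ℝ)
    (hnn : ∀ j, 0 ≤ a j)
    (hsum : a 0 + a 1 + a 2 = s)
    (happ : ∀ j, 0 ≤ app j ∧ app j ≤ a j)
    (h1 : a (i - 1) < 0.8 * s) (h2 : a (i + 1) < 0.05 * s) :
    x * (s / 3 - a (i - 1)) + p * a (i + 1) * (a (i - 1) + app (i - 1))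
        - p * a (i - 1) * (a i + app i)
      ≤ x * s / 3 - 0.05 * p * s * a (i - 1) :=
  drift_bound_region_one_general s p x hp hx i a app hnn hsum happ h1 h2
end
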